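/- Let g be holomorphic on a neighbourhood of the closed arc {e^{it} : a ≤ t ≤ b}, injective there, with g(e^{iθ}) = e^{iw(θ)} for a real-valued continuously differentiable function w on [a,b] satisfying w'(θ) ∈ [c,k] for constants 0 < c < k < ∞. Then there exists δ < 1 such that for all r ∈ [δ,1) and all θ ∈ [a,b], |Arg(1 − g(re^{iθ})/g(e^{iθ}))| < π/4; i.e., g(re^{iθ}) lies in the Stolz angle at g(e^{iθ}) of opening π/2. -/

import Mathlib

open Set Complex
open scoped Real

/-!
Write `E = e^{iθ}`. By the fundamental theorem of calculus along the radius,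
`1 - g(rE)/g(E) = ∫_r^1 F(t, θ) dt` with `F(t, θ) = g'(tE) E / g(E)`, and differentiating
`g(e^{iθ}) = e^{iw(θ)}` gives `F(1, θ) = w'(θ) ≥ c`. Since `F` is uniformly continuous on a compact
set `[1 - η, 1] × [a, b]` inside the domain of `g`, for `r` close to `1` the integrand stays within
`c / 4` of the positive real `w'(θ)`. The integral then lies in the disc of radius
`(1 - r) w'(θ) / 2` about `(1 - r) w'(θ)`, which is contained in the sector `|arg| < π / 4`.
-/

namespace Complex

theorem abs_arg_lt_pi_div_four_of_abs_im_lt_re {z : ℂ} (h : |z.im| < z.re) :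
    |arg z| < π / 4 := by
  have hre : 0 < z.re := (abs_nonneg _).trans_lt h
  obtain ⟨hlo, hhi⟩ := abs_lt.mp (abs_arg_lt_pi_div_two_iff.2 (Or.inl hre))
  have harg : arg z = Real.arctan (z.im / z.re) := by
    rw [← tan_arg, Real.arctan_tan hlo hhi]
  have hq : |z.im / z.re| < 1 := by rwa [abs_div, abs_of_pos hre, div_lt_one hre]
  obtain ⟨hq₁, hq₂⟩ := abs_lt.mp hq
  rw [harg, ← Real.arctan_one, abs_lt, neg_lt, ← Real.arctan_neg]
  exact ⟨Real.arctan_strictMono (by linarith), Real.arctan_strictMono hq₂⟩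

theorem abs_arg_lt_pi_div_four_of_two_mul_norm_sub_lt {z : ℂ} {x : ℝ} (h : 2 * ‖z - x‖ < x) :
    |arg z| < π / 4 := by
  apply abs_arg_lt_pi_div_four_of_abs_im_lt_re
  have hre := abs_le.mp (abs_re_le_norm (z - x))
  have him := abs_im_le_norm (z - x)
  simp only [sub_re, sub_im, ofReal_re, ofReal_im, sub_zero] at hre him
  linarith

end Complex

theorem abs_arg_intervalIntegral_lt_pi_div_four {φ : ℝ → ℂ} {r s x ε : ℝ} (hrs : r < s)
    (hφ : ContinuousOn φ (Icc r s)) (hεx : 2 * ε < x) (hφx : ∀ t ∈ Icc r s, ‖φ t - x‖ ≤ ε) :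
    |arg (∫ t in r..s, φ t)| < π / 4 := by
  apply abs_arg_lt_pi_div_four_of_two_mul_norm_sub_lt (x := (s - r) * x)
  have hint : (∫ t in r..s, φ t) - ((s - r) * x : ℝ) = ∫ t in r..s, (φ t - x) := by
    rw [intervalIntegral.integral_sub (hφ.intervalIntegrable_of_Icc hrs.le)
      intervalIntegrable_const, intervalIntegral.integral_const, real_smul, ofReal_mul]
  have hbound : ‖∫ t in r..s, (φ t - x)‖ ≤ ε * |s - r| :=
    intervalIntegral.norm_integral_le_of_norm_le_const fun t ht =>
      hφx t (Ioc_subset_Icc_self (uIoc_of_le hrs.le ▸ ht))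
  rw [hint]
  rw [abs_of_pos (sub_pos.2 hrs)] at hbound
  nlinarith [sub_pos.2 hrs]

/-- Differentiating `g (exp (t * I)) = exp (w t * I)` at `θ`. -/
theorem deriv_mul_exp_mul_I_eq {g : ℂ → ℂ} {w : ℝ → ℝ} {w' θ : ℝ} {s : Set ℝ}
    (hs : UniqueDiffWithinAt ℝ s θ) (hθ : θ ∈ s)
    (hgw : ∀ t ∈ s, g (exp (t * I)) = exp (w t * I))
    (hg : DifferentiableAt ℂ g (exp (θ * I))) (hw : HasDerivWithinAt w w' s θ) :
    deriv g (exp (θ * I)) * exp (θ * I) = w' * g (exp (θ * I)) := by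
  have hexp : HasDerivAt (fun t : ℝ => exp (t * I)) (exp (θ * I) * I) θ := by
    simpa using ((hasDerivAt_id θ).ofReal_comp.mul_const I).cexp
  have hlhs : HasDerivWithinAt (fun t : ℝ => g (exp (t * I)))
      (deriv g (exp (θ * I)) * (exp (θ * I) * I)) s θ :=
    (hg.hasDerivAt.comp θ hexp).hasDerivWithinAt
  have hrhs : HasDerivWithinAt (fun t : ℝ => g (exp (t * I)))
      (exp (w θ * I) * (w' * I)) s θ :=
    (hw.ofReal_comp.mul_const I).cexp.congr hgw (hgw θ hθ)
  have key := hs.eq_deriv _ hlhs hrhs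
  rw [hgw θ hθ]
  exact mul_right_cancel₀ I_ne_zero (by linear_combination key)

theorem exists_pos_ofReal_mul_exp_mul_I_mem {U : Set ℂ} (hU : IsOpen U) {K : Set ℝ}
    (hK : IsCompact K) (hKU : ∀ θ ∈ K, exp (θ * I) ∈ U) :
    ∃ η ∈ Ioc (0 : ℝ) 1, ∀ t ∈ Icc (1 - η) 1, ∀ θ ∈ K, (t : ℂ) * exp (θ * I) ∈ U := by
  have hcont : Continuous fun θ : ℝ => exp (θ * I) := by fun_prop
  obtain ⟨ε, hε, hthick⟩ := (hK.image hcont).exists_thickening_subset_open hU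
    (image_subset_iff.2 hKU)
  have hη : 0 < min (ε / 2) 1 := by positivity
  refine ⟨min (ε / 2) 1, ⟨hη, min_le_right _ _⟩, fun t ht θ hθ => hthick ?_⟩
  refine Metric.mem_thickening_iff.2 ⟨_, mem_image_of_mem _ hθ, ?_⟩
  calc dist ((t : ℂ) * exp (θ * I)) (exp (θ * I)) = |t - 1| := by
        rw [dist_eq, ← sub_one_mul, norm_mul, norm_exp_ofReal_mul_I, mul_one, ← ofReal_one,
          ← ofReal_sub, norm_real, Real.norm_eq_abs]
    _ ≤ min (ε / 2) 1 := abs_le.2 ⟨by linarith [ht.1], by linarith [ht.2]⟩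
    _ < ε := by linarith [min_le_left (ε / 2) 1]

theorem exists_forall_dist_lt_of_continuousOn_Icc_prod {α : Type*} [PseudoMetricSpace α]
    {F : ℝ × ℝ → α} {s η : ℝ} (hη : 0 < η) {K : Set ℝ} (hK : IsCompact K)
    (hF : ContinuousOn F (Icc (s - η) s ×ˢ K)) {ε : ℝ} (hε : 0 < ε) :
    ∃ δ ∈ Ico (s - η) s, ∀ t ∈ Icc δ s, ∀ θ ∈ K, dist (F (t, θ)) (F (s, θ)) < ε := by
  obtain ⟨d, hd, hF⟩ := Metric.uniformContinuousOn_iff.1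
    ((isCompact_Icc.prod hK).uniformContinuousOn_of_continuous hF) ε hε
  have hm : 0 < min η (d / 2) := by positivity
  refine ⟨s - min η (d / 2), ⟨by linarith [min_le_left η (d / 2)], by linarith⟩,
    fun t ht θ hθ => hF _ ⟨⟨?_, ht.2⟩, hθ⟩ _ ⟨⟨by linarith, le_rfl⟩, hθ⟩ ?_⟩
  · linarith [ht.1, min_le_left η (d / 2)]
  · rw [Prod.dist_eq, dist_self, max_eq_left dist_nonneg, Real.dist_eq,
      abs_of_nonpos (by linarith [ht.2])]
    linarith [ht.1, min_le_right η (d / 2)]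

theorem intervalIntegral_deriv_mul_eq_sub {g : ℂ → ℂ} {U : Set ℂ} (hU : IsOpen U)
    (hg : DifferentiableOn ℂ g U) {z : ℂ} {r s : ℝ} (hrs : r ≤ s)
    (hU' : ∀ t ∈ Icc r s, (t : ℂ) * z ∈ U) :
    ∫ t in r..s, deriv g (t * z) * z = g (s * z) - g (r * z) := by
  have hcont : ContinuousOn (fun t : ℝ => deriv g (t * z) * z) (Icc r s) :=
    ((hg.analyticOnNhd hU).deriv.continuousOn.comp (by fun_prop) hU').mul continuousOn_const
  refine intervalIntegral.integral_eq_sub_of_hasDerivAt (f := fun t : ℝ => g (t * z))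
    (fun t ht => ?_) (hcont.intervalIntegrable_of_Icc hrs)
  rw [uIcc_of_le hrs] at ht
  have hray : HasDerivAt (fun t : ℝ => (t : ℂ) * z) z t := by
    simpa using (hasDerivAt_id t).ofReal_comp.mul_const z
  exact (hg.differentiableAt (hU.mem_nhds (hU' t ht))).hasDerivAt.comp t hray

theorem stolz_angle_claim_general
    (a b : ℝ) (hab : a < b)
    (g : ℂ → ℂ) (U : Set ℂ) (hU : IsOpen U)
    (hKU : {z : ℂ | ∃ t ∈ Icc a b, z = Complex.exp ((t : ℂ) * Complex.I)} ⊆ U)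
    (hg : DifferentiableOn ℂ g U)
    (w w' : ℝ → ℝ) (c k : ℝ) (hck : 0 < c)
    (hw : ∀ θ ∈ Icc a b, g (Complex.exp ((θ : ℝ) * Complex.I)) = Complex.exp ((w θ : ℂ) * Complex.I))
    (hw' : ∀ θ ∈ Icc a b, HasDerivAt w (w' θ) θ)
    (hw'mem : ∀ θ ∈ Icc a b, w' θ ∈ Icc c k) :
    ∃ δ : ℝ, δ < 1 ∧ 0 ≤ δ ∧ ∀ r ∈ Ico δ 1, ∀ θ ∈ Icc a b,
      |Complex.arg (1 - g ((r : ℂ) * Complex.exp ((θ : ℂ) * Complex.I)) /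
          g (Complex.exp ((θ : ℂ) * Complex.I)))| < π / 4 := by
  have hE : ∀ θ ∈ Icc a b, exp (θ * I) ∈ U := fun θ hθ => hKU ⟨θ, hθ, rfl⟩
  have hgE : ∀ θ ∈ Icc a b, g (exp (θ * I)) ≠ 0 := fun θ hθ => hw θ hθ ▸ exp_ne_zero _
  obtain ⟨η, ⟨hη, hη1⟩, hray⟩ := exists_pos_ofReal_mul_exp_mul_I_mem hU isCompact_Icc hE
  set F : ℝ × ℝ → ℂ := fun p =>
    deriv g (p.1 * exp (p.2 * I)) * exp (p.2 * I) / g (exp (p.2 * I))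
  have hF : ContinuousOn F (Icc (1 - η) 1 ×ˢ Icc a b) := by
    refine ContinuousOn.div ?_ ?_ fun p hp => hgE p.2 hp.2
    · exact ((hg.analyticOnNhd hU).deriv.continuousOn.comp (by fun_prop)
        fun p hp => hray p.1 hp.1 p.2 hp.2).mul (by fun_prop)
    · exact hg.continuousOn.comp (by fun_prop) fun p hp => hE p.2 hp.2
  have hF1 : ∀ θ ∈ Icc a b, F (1, θ) = w' θ := fun θ hθ => by
    simp only [F, ofReal_one, one_mul]
    rw [deriv_mul_exp_mul_I_eq (uniqueDiffOn_Icc hab θ hθ) hθ hw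
      (hg.differentiableAt (hU.mem_nhds (hE θ hθ))) (hw' θ hθ).hasDerivWithinAt,
      mul_div_cancel_right₀ _ (hgE θ hθ)]
  obtain ⟨δ, ⟨hδη, hδ1⟩, hδ⟩ :=
    exists_forall_dist_lt_of_continuousOn_Icc_prod hη isCompact_Icc hF (by positivity : 0 < c / 4)
  refine ⟨δ, hδ1, by linarith, fun r hr θ hθ => ?_⟩
  have hrδ : ∀ t ∈ Icc r 1, t ∈ Icc δ 1 := fun t ht => ⟨hr.1.trans ht.1, ht.2⟩
  have hrη : ∀ t ∈ Icc r 1, t ∈ Icc (1 - η) 1 := fun t ht => ⟨hδη.trans (hrδ t ht).1, ht.2⟩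
  have hftc : 1 - g (r * exp (θ * I)) / g (exp (θ * I)) = ∫ t in r..1, F (t, θ) := by
    simp only [F]
    rw [intervalIntegral.integral_div, intervalIntegral_deriv_mul_eq_sub hU hg hr.2.le
      fun t ht => hray t (hrη t ht) θ hθ, ofReal_one, one_mul, sub_div, div_self (hgE θ hθ)]
  rw [hftc]
  refine abs_arg_intervalIntegral_lt_pi_div_four (x := w' θ) (ε := c / 4) hr.2
    (hF.comp (by fun_prop) fun t ht => ⟨hrη t ht, hθ⟩)
    (by linarith [(hw'mem θ hθ).1]) fun t ht => ?_
  rw [← hF1 θ hθ, ← dist_eq_norm]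
  exact (hδ t (hrδ t ht) θ hθ).le

/-- if `g` is holomorphic and injective on a neighbourhood of the closed
arc `{e^{it} : a ≤ t ≤ b}`, with `g(e^{iθ}) = e^{i w(θ)}` for a `C¹` real function `w`
with `w' ∈ [c,k]`, `0 < c < k`, then there is `δ < 1` so that for all `r ∈ [δ,1)` and
`θ ∈ [a,b]`, `|Arg(1 − g(re^{iθ})/g(e^{iθ}))| < π/4`, i.e. `g(re^{iθ})` lies in the
Stolz angle of opening `π/2` at `g(e^{iθ})`. -/
theorem stolz_angle_claim
    (a b : ℝ) (hab : a < b)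
    (g : ℂ → ℂ) (U : Set ℂ) (hU : IsOpen U)
    (hKU : {z : ℂ | ∃ t ∈ Icc a b, z = Complex.exp ((t : ℂ) * Complex.I)} ⊆ U)
    (hg : DifferentiableOn ℂ g U) (hginj : InjOn g U)
    (w w' : ℝ → ℝ) (c k : ℝ) (hck : 0 < c) (hck' : c < k)
    (hw : ∀ θ ∈ Icc a b, g (Complex.exp ((θ : ℝ) * Complex.I)) = Complex.exp ((w θ : ℂ) * Complex.I))
    (hw' : ∀ θ ∈ Icc a b, HasDerivAt w (w' θ) θ)
    (hw'cont : ContinuousOn w' (Icc a b))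
    (hw'mem : ∀ θ ∈ Icc a b, w' θ ∈ Icc c k) :
    ∃ δ : ℝ, δ < 1 ∧ 0 ≤ δ ∧ ∀ r ∈ Ico δ 1, ∀ θ ∈ Icc a b,
      |Complex.arg (1 - g ((r : ℂ) * Complex.exp ((θ : ℂ) * Complex.I)) /
          g (Complex.exp ((θ : ℂ) * Complex.I)))| < π / 4 :=
  stolz_angle_claim_general a b hab g U hU hKU hg w w' c k hck hw hw' hw'mem
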